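/- Let X be a global 2-torsion group law. Then for every x ∈ X(C₂) and every n ∈ ℕ there exist unique elements x₀, ..., x_{n-1} ∈ X(1) and x̃ ∈ X(C₂) such that x = Σ_{i=0}^{n-1} p*(xᵢ)·eⁱ + x̃·eⁿ, where p : C₂ → 1 is the projection. -/

import Mathlib

open CategoryTheory Opposite

/-- The category of elementary abelian 2-groups, modeled as finite `ℤ/2`-vector spaces. -/
abbrev EA2 : Type 1 := FGModuleCat (ZMod 2)

/-- The cyclic group `C₂` of order 2. -/
noncomputable def C2 : EA2 := FGModuleCat.of (ZMod 2) (ZMod 2)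

/-- The trivial elementary abelian 2-group. -/
noncomputable def trivGrp : EA2 := FGModuleCat.of (ZMod 2) PUnit

/-- The kernel of a character `V : A → C₂`, as an elementary abelian 2-group. -/
noncomputable def kerObj {A : EA2} (V : A ⟶ C2) : EA2 :=
  FGModuleCat.of (ZMod 2) (LinearMap.ker V.hom.hom)

/-- The inclusion `ker V ↪ A`. -/
noncomputable def kerIncl {A : EA2} (V : A ⟶ C2) : kerObj V ⟶ A :=
  ObjectProperty.homMk (ModuleCat.ofHom (LinearMap.ker V.hom.hom).subtype)

/-- A global 2-torsion group law: a contravariant functor `X` from elementary abelian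
2-groups to commutative rings together with a coordinate `e ∈ X(C₂)` such that for every
elementary abelian 2-group `A` and nontrivial character `V : A → C₂` the sequence
`0 → X(A) --(·e_V)--> X(A) --res--> X(ker V) → 0` is exact, where `e_V = X(V)(e)`. -/
structure GlobalTwoTorsionGroupLaw where
  X : EA2ᵒᵖ ⥤ CommRingCat
  e : X.obj (op C2)
  euler_regular : ∀ (A : EA2) (V : A ⟶ C2), V ≠ 0 →
    Function.Injective (fun x : X.obj (op A) => x * X.map V.op e)
  euler_exact : ∀ (A : EA2) (V : A ⟶ C2), V ≠ 0 → ∀ x : X.obj (op A),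
    X.map (kerIncl V).op x = 0 ↔ ∃ y : X.obj (op A), x = y * X.map V.op e
  res_surjective : ∀ (A : EA2) (V : A ⟶ C2), V ≠ 0 →
    Function.Surjective (X.map (kerIncl V).op)

/-- The projection `C₂ → 1` to the trivial group. -/
noncomputable def projTriv : C2 ⟶ trivGrp := 0


/-!
The composite `X(1) --p*--> X(C₂) --res--> X(ker id)` is induced by a morphism between trivial
groups, hence bijective, so `p*` splits the exact sequence
`0 → X(C₂) --(·e)--> X(C₂) → X(1) → 0`.
Thus `X(C₂) = p*X(1) ⊕ X(C₂)·e` with unique components; expanding the cofactor of `e` again,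
`n` times, gives the decomposition.
-/

open Function

section Expansion

variable {M N R : Type*} [AddZeroClass M] [AddGroup N] [CommRing R] (s : M →+ R) (e : R)

def eulerExpansion (n : ℕ) (q : (Fin n → M) × R) : R :=
  ∑ i : Fin n, s (q.1 i) * e ^ (i : ℕ) + q.2 * e ^ n

lemma eulerExpansion_zero (q : (Fin 0 → M) × R) : eulerExpansion s e 0 q = q.2 := by
  simp [eulerExpansion]

lemma eulerExpansion_succ_cons (n : ℕ) (a : M) (q : (Fin n → M) × R) :
    eulerExpansion s e (n + 1) (Fin.cons a q.1, q.2) = s a + eulerExpansion s e n q * e := by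
  simp only [eulerExpansion, Fin.sum_univ_succ, Fin.cons_zero, Fin.cons_succ, Fin.val_zero,
    Fin.val_succ, pow_zero, mul_one, pow_succ, add_mul, Finset.sum_mul, mul_assoc, add_assoc]

lemma bijective_add_mul_of_split {r : R →+ N} (hrs : Bijective (r ∘ s))
    (hker : ∀ x, r x = 0 ↔ ∃ y, x = y * e) (hreg : Injective (· * e)) :
    Bijective (fun q : M × R => s q.1 + q.2 * e) := by
  have hr_mul (y : R) : r (y * e) = 0 := (hker _).mpr ⟨y, rfl⟩
  refine ⟨fun ⟨a, w⟩ ⟨a', w'⟩ h => ?_, fun x => ?_⟩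
  · have ha : a = a' := hrs.injective <| by
      simpa only [comp_apply, map_add, hr_mul, add_zero] using congrArg r h
    subst ha
    exact Prod.ext rfl (hreg (add_left_cancel h))
  · obtain ⟨a, ha⟩ := hrs.surjective (r x)
    obtain ⟨y, hy⟩ := (hker (x - s a)).mp (by rw [map_sub, sub_eq_zero, ← ha, comp_apply])
    exact ⟨(a, y), by simp [← hy]⟩

lemma bijective_eulerExpansion (hsplit : Bijective (fun q : M × R => s q.1 + q.2 * e)) (n : ℕ) :
    Bijective (eulerExpansion s e n) := by
  induction n with
  | zero =>
    refine ⟨fun q q' h => Prod.ext (Subsingleton.elim _ _) ?_,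
      fun x => ⟨(Fin.elim0, x), eulerExpansion_zero s e _⟩⟩
    simpa only [eulerExpansion_zero] using h
  | succ n ih =>
    let cons : M × (Fin n → M) × R ≃ (Fin (n + 1) → M) × R :=
      (Equiv.prodAssoc _ _ _).symm.trans ((Fin.consEquiv fun _ => M).prodCongr (Equiv.refl R))
    have hcomp : eulerExpansion s e (n + 1) ∘ cons =
        (fun q : M × R => s q.1 + q.2 * e) ∘ Prod.map id (eulerExpansion s e n) :=
      funext fun ⟨a, q⟩ => eulerExpansion_succ_cons s e n a q
    rw [← cons.bijective_comp, hcomp]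
    exact hsplit.comp (bijective_id.prodMap ih)

end Expansion

lemma C2_id_ne_zero : (𝟙 C2 : C2 ⟶ C2) ≠ 0 := fun h =>
  one_ne_zero (α := ZMod 2) <|
    congrArg (fun f : C2 ⟶ C2 => f.hom.hom (show C2 from (1 : ZMod 2))) h

lemma isZero_trivGrp : Limits.IsZero trivGrp :=
  Limits.IsZero.of_full_of_faithful_of_isZero (ObjectProperty.ι _) _
    (ModuleCat.isZero_of_subsingleton (ModuleCat.of (ZMod 2) PUnit))

lemma isZero_kerObj_id : Limits.IsZero (kerObj (𝟙 C2)) := by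
  have : Subsingleton (LinearMap.ker (𝟙 C2 : C2 ⟶ C2).hom.hom) :=
    ⟨fun a b => Subtype.ext ((show a.1 = 0 from a.2).trans (show b.1 = 0 from b.2).symm)⟩
  exact Limits.IsZero.of_full_of_faithful_of_isZero (ObjectProperty.ι _) _
    (ModuleCat.isZero_of_subsingleton
      (ModuleCat.of (ZMod 2) (LinearMap.ker (𝟙 C2 : C2 ⟶ C2).hom.hom)))

namespace GlobalTwoTorsionGroupLaw

variable (L : GlobalTwoTorsionGroupLaw)

lemma map_id_e : L.X.map (𝟙 C2).op L.e = L.e := by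
  rw [op_id, L.X.map_id, CommRingCat.id_apply]

lemma bijective_res_comp_pullback :
    Bijective (L.X.map (kerIncl (𝟙 C2)).op ∘ L.X.map projTriv.op) := by
  have : IsIso (kerIncl (𝟙 C2) ≫ projTriv) := isZero_kerObj_id.isIso isZero_trivGrp _
  rw [← ConcreteCategory.coe_comp, ← L.X.map_comp, ← op_comp]
  exact ConcreteCategory.bijective_of_isIso _

end GlobalTwoTorsionGroupLaw

/-- For a global 2-torsion group law `X`, every `x ∈ X(C₂)` admits, for
each `n`, a unique decomposition `x = Σ_{i<n} p*(xᵢ)·eⁱ + x̃·eⁿ` with `xᵢ ∈ X(1)`,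
`x̃ ∈ X(C₂)`, where `p : C₂ → 1` is the projection. -/
theorem stmt13 (L : GlobalTwoTorsionGroupLaw) (x : L.X.obj (op C2)) (n : ℕ) :
    ∃! q : (Fin n → L.X.obj (op trivGrp)) × L.X.obj (op C2),
      x = (∑ i : Fin n, L.X.map projTriv.op (q.1 i) * L.e ^ (i : ℕ)) + q.2 * L.e ^ n := by
  have hsplit := bijective_add_mul_of_split (L.X.map projTriv.op).hom.toAddMonoidHom L.e
    (r := (L.X.map (kerIncl (𝟙 C2)).op).hom.toAddMonoidHom) L.bijective_res_comp_pullback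
    (fun y => by rw [← L.map_id_e]; exact L.euler_exact C2 (𝟙 C2) C2_id_ne_zero y)
    (by rw [← L.map_id_e]; exact L.euler_regular C2 (𝟙 C2) C2_id_ne_zero)
  simp only [eq_comm (a := x)]
  exact (bijective_eulerExpansion _ _ hsplit n).existsUnique x
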